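/- arXiv:2101.12689 — 2 statements merged into one kernel-verified Lean document; each statement's English description precedes it below -/
import Mathlib

section
/- Let σ be a permutation of a finite set and τ the transposition of two elements a, b. If a and b belong to the same cycle c of σ of length ℓ, then there is a minimal ℓ₁ > 0 with σ^{ℓ₁}(a) = b, the permutations σ and στ have all cycles of σ except c in common, and the elements of c belong to two cycles of στ of lengths ℓ₁ and ℓ − ℓ₁. If a and b belong to distinct cycles c₁, c₂ of σ of lengths ℓ₁, ℓ₂, then σ and στ have all cycles of σ except c₁, c₂ in common, and the elements of c₁ ∪ c₂ form a single cycle of στ of length ℓ₁ + ℓ₂. -/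
open Equiv Function
set_option linter.unusedSectionVars false

namespace StmtAux

variable {X : Type*} [Fintype X] [DecidableEq X]

lemma sameCycle_of_pow {f : Equiv.Perm X} {x y : X} {n : ℕ} (h : (f ^ n) x = y) :
    f.SameCycle x y := ⟨(n : ℤ), by rwa [zpow_natCast]⟩

lemma pow_minPeriod (σ : Equiv.Perm X) (x : X) :
    (σ ^ Function.minimalPeriod (⇑σ) x) x = x := by
  have h := Function.iterate_minimalPeriod (f := ⇑σ) (x := x)
  rwa [Equiv.Perm.iterate_eq_pow] at h

lemma minPeriod_pos (σ : Equiv.Perm X) (x : X) : 0 < Function.minimalPeriod (⇑σ) x := by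
  apply Function.IsPeriodicPt.minimalPeriod_pos (n := orderOf σ) (orderOf_pos σ)
  show (⇑σ)^[orderOf σ] x = x
  rw [Equiv.Perm.iterate_eq_pow, pow_orderOf_eq_one]; rfl

lemma pow_inj (σ : Equiv.Perm X) (x : X) {j k : ℕ}
    (hj : j < Function.minimalPeriod (⇑σ) x) (hk : k < Function.minimalPeriod (⇑σ) x)
    (h : (σ ^ j) x = (σ ^ k) x) : j = k :=
  Function.iterate_injOn_Iio_minimalPeriod hj hk
    (by simp only [Equiv.Perm.iterate_eq_pow]; exact h)

lemma key_mod (f : Equiv.Perm X) (x : X) (N : ℕ) (hN : 0 < N) (g : ℕ → X)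
    (h0 : g 0 = x) (hcyc : g N = x) (hstep : ∀ k < N, f (g k) = g (k + 1)) :
    ∀ n : ℕ, (f ^ n) x = g (n % N) := by
  intro n
  induction n with
  | zero => simpa [h0] using h0.symm
  | succ n ih =>
    rw [pow_succ', Equiv.Perm.mul_apply, ih, hstep _ (Nat.mod_lt _ hN)]
    have hmod : (n % N + 1) % N = (n + 1) % N := by rw [Nat.mod_add_mod]
    rcases lt_or_eq_of_le (Nat.succ_le_of_lt (Nat.mod_lt n hN)) with hlt | heq
    · rw [← hmod, Nat.mod_eq_of_lt hlt]
    · have heq' : n % N + 1 = N := heq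
      rw [heq', hcyc, ← hmod, heq', Nat.mod_self, h0]

lemma orbit_eq (f : Equiv.Perm X) (x : X) (N : ℕ) (hN : 0 < N) (g : ℕ → X)
    (h0 : g 0 = x) (hcyc : g N = x) (hstep : ∀ k < N, f (g k) = g (k + 1)) :
    {y | f.SameCycle x y} = g '' Set.Iio N := by
  ext y
  simp only [Set.mem_setOf_eq, Set.mem_image, Set.mem_Iio]
  constructor
  · intro h
    obtain ⟨i, _, rfl⟩ := h.exists_pow_eq'
    exact ⟨i % N, Nat.mod_lt _ hN, (key_mod f x N hN g h0 hcyc hstep i).symm⟩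
  · rintro ⟨k, hk, rfl⟩
    apply sameCycle_of_pow (n := k)
    rw [key_mod f x N hN g h0 hcyc hstep k, Nat.mod_eq_of_lt hk]

lemma orbit_ncard (f : Equiv.Perm X) (x : X) (N : ℕ) (hN : 0 < N) (g : ℕ → X)
    (h0 : g 0 = x) (hcyc : g N = x) (hstep : ∀ k < N, f (g k) = g (k + 1))
    (hinj : Set.InjOn g (Set.Iio N)) :
    {y | f.SameCycle x y}.ncard = N := by
  rw [orbit_eq f x N hN g h0 hcyc hstep, Set.ncard_image_of_injOn hinj,
    ← Finset.coe_Iio, Set.ncard_coe_finset, Nat.card_Iio]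

lemma preserved (σ : Equiv.Perm X) (a b x : X)
    (ha : ¬ σ.SameCycle x a) (hb : ¬ σ.SameCycle x b) :
    {y | σ.SameCycle x y} = {y | (σ * Equiv.swap a b).SameCycle x y} := by
  set N := Function.minimalPeriod (⇑σ) x with hNdef
  have hN : 0 < N := minPeriod_pos σ x
  have hpa : ∀ n : ℕ, (σ ^ n) x ≠ a := fun n h => ha (sameCycle_of_pow h)
  have hpb : ∀ n : ℕ, (σ ^ n) x ≠ b := fun n h => hb (sameCycle_of_pow h)
  have h0 : (σ ^ 0) x = x := by simp
  have hcyc : (σ ^ N) x = x := pow_minPeriod σ x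
  have hstepσ : ∀ k < N, σ ((σ ^ k) x) = (σ ^ (k + 1)) x := by
    intro k _; rw [← Equiv.Perm.mul_apply, ← pow_succ']
  have hstepπ : ∀ k < N, (σ * Equiv.swap a b) ((σ ^ k) x) = (σ ^ (k + 1)) x := by
    intro k hk
    rw [Equiv.Perm.mul_apply, Equiv.swap_apply_of_ne_of_ne (hpa k) (hpb k), hstepσ k hk]
  rw [orbit_eq σ x N hN _ h0 hcyc hstepσ,
    orbit_eq (σ * Equiv.swap a b) x N hN _ h0 hcyc hstepπ]

end StmtAux

/-- Effect of multiplying a permutation `σ` by a transposition `τ = (a b)` on its cycles: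
if `a, b` lie in the same cycle `c` of `σ` of length `ℓ` then there is a minimal `ℓ₁ > 0`
with `σ^{ℓ₁} a = b`, `σ` and `στ` have all cycles of `σ` except `c` in common, and the
elements of `c` fall into two cycles of `στ` of lengths `ℓ₁` and `ℓ − ℓ₁`; if `a, b` lie
in distinct cycles `c₁, c₂` of lengths `ℓ₁, ℓ₂`, then all other cycles are common to `σ`
and `στ`, and `c₁ ∪ c₂` forms a single cycle of `στ` of length `ℓ₁ + ℓ₂`.
(The cycle of `x` is the set of `y` with `SameCycle x y`; its length is its cardinality.) -/
theorem stmt_1 {X : Type*} [Fintype X] [DecidableEq X]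
    (σ τ : Equiv.Perm X) (a b : X) (hab : a ≠ b) (hτ : τ = Equiv.swap a b) :
    (σ.SameCycle a b →
       ∃ ℓ₁ : ℕ, 0 < ℓ₁ ∧ (σ ^ ℓ₁) a = b ∧ (∀ m : ℕ, 0 < m → m < ℓ₁ → (σ ^ m) a ≠ b) ∧
         (∀ x : X, ¬ σ.SameCycle a x →
            {y : X | σ.SameCycle x y} = {y : X | (σ * τ).SameCycle x y}) ∧
         ¬ (σ * τ).SameCycle a b ∧
         {y : X | σ.SameCycle a y}
           = {y : X | (σ * τ).SameCycle a y} ∪ {y : X | (σ * τ).SameCycle b y} ∧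
         (({y : X | (σ * τ).SameCycle a y}.ncard = ℓ₁ ∧
             {y : X | (σ * τ).SameCycle b y}.ncard = {y : X | σ.SameCycle a y}.ncard - ℓ₁) ∨
          ({y : X | (σ * τ).SameCycle b y}.ncard = ℓ₁ ∧
             {y : X | (σ * τ).SameCycle a y}.ncard = {y : X | σ.SameCycle a y}.ncard - ℓ₁)))
    ∧
    (¬ σ.SameCycle a b →
       (∀ x : X, ¬ σ.SameCycle a x → ¬ σ.SameCycle b x →
          {y : X | σ.SameCycle x y} = {y : X | (σ * τ).SameCycle x y}) ∧
       (σ * τ).SameCycle a b ∧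
       {y : X | (σ * τ).SameCycle a y}
         = {y : X | σ.SameCycle a y} ∪ {y : X | σ.SameCycle b y} ∧
       {y : X | (σ * τ).SameCycle a y}.ncard
         = {y : X | σ.SameCycle a y}.ncard + {y : X | σ.SameCycle b y}.ncard) := by
  subst hτ
  set π := σ * Equiv.swap a b with hπdef
  have hπa : π a = σ b := by rw [hπdef, Equiv.Perm.mul_apply, Equiv.swap_apply_left]
  have hπb : π b = σ a := by rw [hπdef, Equiv.Perm.mul_apply, Equiv.swap_apply_right]
  have hπne : ∀ z : X, z ≠ a → z ≠ b → π z = σ z := by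
    intro z h1 h2
    rw [hπdef, Equiv.Perm.mul_apply, Equiv.swap_apply_of_ne_of_ne h1 h2]
  set p := Function.minimalPeriod (⇑σ) a with hpdef
  have hp : 0 < p := StmtAux.minPeriod_pos σ a
  have hpa : (σ ^ p) a = a := StmtAux.pow_minPeriod σ a
  have hka : ∀ k : ℕ, 0 < k → k < p → (σ ^ k) a ≠ a := by
    intro k hk hkp hc
    have := StmtAux.pow_inj σ a hkp hp (by simpa using hc)
    omega
  have hstepσa : ∀ k < p, σ ((σ ^ k) a) = (σ ^ (k + 1)) a := by
    intro k _; rw [← Equiv.Perm.mul_apply, ← pow_succ']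
  have hOσa : {y | σ.SameCycle a y} = (fun k => (σ ^ k) a) '' Set.Iio p :=
    StmtAux.orbit_eq σ a p hp _ (by simp) hpa hstepσa
  have hinjσa : Set.InjOn (fun k => (σ ^ k) a) (Set.Iio p) := by
    intro j hj k hk hjk
    exact StmtAux.pow_inj σ a hj hk hjk
  have hcardσa : {y | σ.SameCycle a y}.ncard = p :=
    StmtAux.orbit_ncard σ a p hp _ (by simp) hpa hstepσa hinjσa
  constructor
  · -- same cycle case
    intro h
    have hex : ∃ n : ℕ, 0 < n ∧ (σ ^ n) a = b := by
      obtain ⟨i, _, hi⟩ := h.exists_pow_eq'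
      refine ⟨i, ?_, hi⟩
      rcases Nat.eq_zero_or_pos i with h0 | h0
      · exact absurd (by subst h0; simpa using hi) hab
      · exact h0
    obtain ⟨hℓpos, hℓb⟩ := Nat.find_spec hex
    set ℓ₁ := Nat.find hex with hℓdef
    have hmin : ∀ m : ℕ, 0 < m → m < ℓ₁ → (σ ^ m) a ≠ b := by
      intro m hm hmℓ hc
      exact Nat.find_min hex hmℓ ⟨hm, hc⟩
    have hℓp : ℓ₁ < p := by
      by_contra hcon
      push_neg at hcon
      rcases eq_or_lt_of_le hcon with he | hl
      · rw [he] at hpa; exact hab (hpa.symm.trans hℓb)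
      · have h2 : (σ ^ (ℓ₁ - p)) a = b := by
          have h3 : (σ ^ (ℓ₁ - p)) ((σ ^ p) a) = (σ ^ ℓ₁) a := by
            rw [← Equiv.Perm.mul_apply, ← pow_add, Nat.sub_add_cancel hcon]
          rw [hpa] at h3
          rw [h3]; exact hℓb
        exact hmin (ℓ₁ - p) (by omega) (by omega) h2
    set N₂ := p - ℓ₁ with hN₂def
    have hN₂ : 0 < N₂ := by omega
    set gB : ℕ → X := fun k => if k = 0 then b else (σ ^ k) a with hgBdef
    set gA : ℕ → X := fun k => if k = 0 then a else (σ ^ (ℓ₁ + k)) a with hgAdef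
    have h0B : gB 0 = b := by simp [hgBdef]
    have hcycB : gB ℓ₁ = b := by
      simp only [hgBdef, if_neg hℓpos.ne']; exact hℓb
    have hstepB : ∀ k < ℓ₁, π (gB k) = gB (k + 1) := by
      intro k hk
      rcases Nat.eq_zero_or_pos k with rfl | hk0
      · rw [h0B, hπb, show (0:ℕ) + 1 = 1 from rfl]
        simp only [hgBdef, if_neg one_ne_zero, pow_one]
      · simp only [hgBdef, if_neg hk0.ne', if_neg (Nat.succ_ne_zero k)]
        rw [hπne _ (hka k hk0 (hk.trans hℓp)) (hmin k hk0 hk), hstepσa k (hk.trans hℓp)]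
    have hinjB : Set.InjOn gB (Set.Iio ℓ₁) := by
      intro j hj k hk hjk
      simp only [Set.mem_Iio] at hj hk
      rcases Nat.eq_zero_or_pos j with rfl | hj0 <;> rcases Nat.eq_zero_or_pos k with rfl | hk0
      · rfl
      · simp only [hgBdef, if_pos rfl, if_neg hk0.ne'] at hjk
        exact absurd hjk.symm (hmin k hk0 hk)
      · simp only [hgBdef, if_pos rfl, if_neg hj0.ne'] at hjk
        exact absurd hjk (hmin j hj0 hj)
      · simp only [hgBdef, if_neg hj0.ne', if_neg hk0.ne'] at hjk
        exact StmtAux.pow_inj σ a (hj.trans hℓp) (hk.trans hℓp) hjk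
    have h0A : gA 0 = a := by simp [hgAdef]
    have hcycA : gA N₂ = a := by
      simp only [hgAdef, if_neg hN₂.ne']
      rw [show ℓ₁ + N₂ = p by omega]; exact hpa
    have hstepA : ∀ k < N₂, π (gA k) = gA (k + 1) := by
      intro k hk
      rcases Nat.eq_zero_or_pos k with rfl | hk0
      · rw [h0A, hπa, ← hℓb, hstepσa ℓ₁ hℓp, show (0:ℕ) + 1 = 1 from rfl]
        simp only [hgAdef, if_neg one_ne_zero]
      · simp only [hgAdef, if_neg hk0.ne', if_neg (Nat.succ_ne_zero k)]
        have hne_a : (σ ^ (ℓ₁ + k)) a ≠ a := hka _ (by omega) (by omega)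
        have hne_b : (σ ^ (ℓ₁ + k)) a ≠ b := by
          intro hc
          have := StmtAux.pow_inj σ a (show ℓ₁ + k < p by omega) hℓp (hc.trans hℓb.symm)
          omega
        rw [hπne _ hne_a hne_b, hstepσa _ (by omega), show ℓ₁ + (k + 1) = ℓ₁ + k + 1 from by omega]
    have hinjA : Set.InjOn gA (Set.Iio N₂) := by
      intro j hj k hk hjk
      simp only [Set.mem_Iio] at hj hk
      rcases Nat.eq_zero_or_pos j with rfl | hj0 <;> rcases Nat.eq_zero_or_pos k with rfl | hk0
      · rfl
      · simp only [hgAdef, if_pos rfl, if_neg hk0.ne'] at hjk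
        exact absurd hjk.symm (hka _ (by omega) (by omega))
      · simp only [hgAdef, if_pos rfl, if_neg hj0.ne'] at hjk
        exact absurd hjk (hka _ (by omega) (by omega))
      · simp only [hgAdef, if_neg hj0.ne', if_neg hk0.ne'] at hjk
        have := StmtAux.pow_inj σ a (show ℓ₁ + j < p by omega) (show ℓ₁ + k < p by omega) hjk
        omega
    have hOB : {y | π.SameCycle b y} = gB '' Set.Iio ℓ₁ :=
      StmtAux.orbit_eq π b ℓ₁ hℓpos gB h0B hcycB hstepB
    have hOA : {y | π.SameCycle a y} = gA '' Set.Iio N₂ :=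
      StmtAux.orbit_eq π a N₂ hN₂ gA h0A hcycA hstepA
    refine ⟨ℓ₁, hℓpos, hℓb, hmin, ?_, ?_, ?_, ?_⟩
    · intro x hx
      exact StmtAux.preserved σ a b x (fun hc => hx hc.symm) (fun hc => hx (h.trans hc.symm))
    · intro hc
      have hmem : b ∈ {y | π.SameCycle a y} := hc
      rw [hOA] at hmem
      obtain ⟨k, hk, hgk⟩ := hmem
      simp only [Set.mem_Iio] at hk
      rcases Nat.eq_zero_or_pos k with rfl | hk0
      · rw [h0A] at hgk; exact hab hgk
      · simp only [hgAdef, if_neg hk0.ne'] at hgk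
        have := StmtAux.pow_inj σ a (show ℓ₁ + k < p by omega) hℓp (hgk.trans hℓb.symm)
        omega
    · rw [hOσa, hOA, hOB]
      ext y
      simp only [Set.mem_image, Set.mem_union, Set.mem_Iio]
      constructor
      · rintro ⟨k, hk, rfl⟩
        rcases Nat.lt_trichotomy k ℓ₁ with h1 | h1 | h1
        · rcases Nat.eq_zero_or_pos k with rfl | hk0
          · exact Or.inl ⟨0, hN₂, by simp [h0A]⟩
          · exact Or.inr ⟨k, h1, by simp [hgBdef, hk0.ne']⟩
        · subst h1
          exact Or.inr ⟨0, hℓpos, by rw [h0B, hℓb]⟩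
        · refine Or.inl ⟨k - ℓ₁, by omega, ?_⟩
          simp only [hgAdef, if_neg (show k - ℓ₁ ≠ 0 by omega)]
          rw [show ℓ₁ + (k - ℓ₁) = k from by omega]
      · rintro (⟨k, hk, rfl⟩ | ⟨k, hk, rfl⟩)
        · rcases Nat.eq_zero_or_pos k with rfl | hk0
          · exact ⟨0, hp, by simp [h0A]⟩
          · exact ⟨ℓ₁ + k, by omega, by simp [hgAdef, hk0.ne']⟩
        · rcases Nat.eq_zero_or_pos k with rfl | hk0
          · exact ⟨ℓ₁, hℓp, by rw [h0B, hℓb]⟩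
          · exact ⟨k, by omega, by simp [hgBdef, hk0.ne']⟩
    · refine Or.inr ⟨StmtAux.orbit_ncard π b ℓ₁ hℓpos gB h0B hcycB hstepB hinjB, ?_⟩
      rw [StmtAux.orbit_ncard π a N₂ hN₂ gA h0A hcycA hstepA hinjA, hcardσa]
  · -- distinct cycles case
    intro hnc
    set q := Function.minimalPeriod (⇑σ) b with hqdef
    have hq : 0 < q := StmtAux.minPeriod_pos σ b
    have hqb : (σ ^ q) b = b := StmtAux.pow_minPeriod σ b
    have hkb : ∀ k : ℕ, 0 < k → k < q → (σ ^ k) b ≠ b := by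
      intro k hk hkq hc
      have := StmtAux.pow_inj σ b hkq hq (by simpa using hc)
      omega
    have hstepσb : ∀ k < q, σ ((σ ^ k) b) = (σ ^ (k + 1)) b := by
      intro k _; rw [← Equiv.Perm.mul_apply, ← pow_succ']
    have hOσb : {y | σ.SameCycle b y} = (fun k => (σ ^ k) b) '' Set.Iio q :=
      StmtAux.orbit_eq σ b q hq _ (by simp) hqb hstepσb
    have hinjσb : Set.InjOn (fun k => (σ ^ k) b) (Set.Iio q) := by
      intro j hj k hk hjk
      exact StmtAux.pow_inj σ b hj hk hjk
    have hcardσb : {y | σ.SameCycle b y}.ncard = q :=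
      StmtAux.orbit_ncard σ b q hq _ (by simp) hqb hstepσb hinjσb
    have hcross : ∀ j k : ℕ, (σ ^ j) a ≠ (σ ^ k) b := by
      intro j k hc
      have h1 : σ.SameCycle a ((σ ^ j) a) := StmtAux.sameCycle_of_pow rfl
      have h2 : σ.SameCycle ((σ ^ j) a) b := by
        rw [hc]
        exact (StmtAux.sameCycle_of_pow (rfl : (σ ^ k) b = (σ ^ k) b)).symm
      exact hnc (h1.trans h2)
    have hab' : ∀ j : ℕ, (σ ^ j) a ≠ b := by
      intro j hc
      exact hcross j 0 (by simpa using hc)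
    have hba' : ∀ k : ℕ, (σ ^ k) b ≠ a := by
      intro k hc
      exact hcross 0 k (by simpa using hc.symm)
    set g : ℕ → X := fun k => if k = 0 then b else if k ≤ p then (σ ^ k) a
      else (σ ^ (k - p)) b with hgdef
    have hN : 0 < p + q := by omega
    have h0g : g 0 = b := by simp [hgdef]
    have hcycg : g (p + q) = b := by
      simp only [hgdef, if_neg (show p + q ≠ 0 by omega), if_neg (show ¬ p + q ≤ p by omega)]
      rw [show p + q - p = q from by omega]
      exact hqb
    have hstepg : ∀ k < p + q, π (g k) = g (k + 1) := by
      intro k hk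
      rcases Nat.lt_trichotomy k p with h1 | h1 | h1
      · rcases Nat.eq_zero_or_pos k with rfl | hk0
        · rw [h0g, hπb, show (0:ℕ) + 1 = 1 from rfl]
          simp only [hgdef, if_neg one_ne_zero, if_pos (show 1 ≤ p from hp), pow_one]
        · simp only [hgdef, if_neg hk0.ne', if_pos (le_of_lt h1),
            if_neg (Nat.succ_ne_zero k), if_pos (show k + 1 ≤ p from h1)]
          rw [hπne _ (hka k hk0 h1) (hab' k), hstepσa k h1]
      · subst h1
        simp only [hgdef, if_neg hp.ne', if_pos le_rfl, if_neg (Nat.succ_ne_zero p),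
          if_neg (show ¬ p + 1 ≤ p by omega)]
        rw [hpa, hπa, show p + 1 - p = 1 from by omega, pow_one]
      · simp only [hgdef, if_neg (show k ≠ 0 by omega), if_neg (show ¬ k ≤ p by omega),
          if_neg (Nat.succ_ne_zero k), if_neg (show ¬ k + 1 ≤ p by omega)]
        rw [hπne _ (hba' (k - p)) (hkb (k - p) (by omega) (by omega)),
          hstepσb (k - p) (by omega), show k + 1 - p = k - p + 1 from by omega]
    have hinjg : Set.InjOn g (Set.Iio (p + q)) := by
      intro j hj k hk hjk
      simp only [Set.mem_Iio] at hj hk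
      have key : ∀ m n : ℕ, m < p + q → n < p + q → g m = g n → m ≤ n → m = n := by
        intro m n hm hn hmn hle
        rcases Nat.eq_zero_or_pos m with rfl | hm0
        · rcases Nat.eq_zero_or_pos n with rfl | hn0
          · rfl
          · rcases le_or_gt n p with h2 | h2
            · simp only [hgdef, if_pos rfl, if_neg hn0.ne', if_pos h2] at hmn
              exact absurd hmn.symm (hab' n)
            · simp only [hgdef, if_pos rfl, if_neg hn0.ne', if_neg (not_le.mpr h2)] at hmn
              exact (hkb (n - p) (by omega) (by omega) hmn.symm).elim
        · have hn0 : 0 < n := lt_of_lt_of_le hm0 hle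
          rcases le_or_gt m p with h2 | h2 <;> rcases le_or_gt n p with h3 | h3
          · simp only [hgdef, if_neg hm0.ne', if_pos h2, if_neg hn0.ne', if_pos h3] at hmn
            rcases eq_or_lt_of_le h2 with he2 | hl2 <;> rcases eq_or_lt_of_le h3 with he3 | hl3
            · omega
            · subst he2
              rw [hpa] at hmn
              exact absurd hmn (fun hc => hka n hn0 hl3 hc.symm)
            · subst he3
              rw [hpa] at hmn
              exact absurd hmn (hka m hm0 hl2)
            · exact StmtAux.pow_inj σ a hl2 hl3 hmn
          · simp only [hgdef, if_neg hm0.ne', if_pos h2, if_neg hn0.ne',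
              if_neg (not_le.mpr h3)] at hmn
            exact absurd hmn (hcross m (n - p))
          · omega
          · simp only [hgdef, if_neg hm0.ne', if_neg (not_le.mpr h2), if_neg hn0.ne',
              if_neg (not_le.mpr h3)] at hmn
            have := StmtAux.pow_inj σ b (show m - p < q by omega) (show n - p < q by omega) hmn
            omega
      rcases le_total j k with hle | hle
      · exact key j k hj hk hjk hle
      · exact (key k j hk hj hjk.symm hle).symm
    have hOg : {y | π.SameCycle b y} = g '' Set.Iio (p + q) :=
      StmtAux.orbit_eq π b (p + q) hN g h0g hcycg hstepg
    have hcardg : {y | π.SameCycle b y}.ncard = p + q :=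
      StmtAux.orbit_ncard π b (p + q) hN g h0g hcycg hstepg hinjg
    have hπab : π.SameCycle a b := by
      have hmem : a ∈ {y | π.SameCycle b y} := by
        rw [hOg]
        refine ⟨p, by simp only [Set.mem_Iio]; omega, ?_⟩
        simp only [hgdef, if_neg hp.ne', if_pos le_rfl]
        exact hpa
      exact (hmem : π.SameCycle b a).symm
    have hsets : {y | π.SameCycle a y} = {y | π.SameCycle b y} := by
      ext y
      exact ⟨fun h' => hπab.symm.trans h', fun h' => hπab.trans h'⟩
    refine ⟨?_, hπab, ?_, ?_⟩
    · intro x hax hbx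
      exact StmtAux.preserved σ a b x (fun hc => hax hc.symm) (fun hc => hbx hc.symm)
    · rw [hsets, hOg, hOσa, hOσb]
      ext y
      simp only [Set.mem_image, Set.mem_union, Set.mem_Iio]
      constructor
      · rintro ⟨k, hk, rfl⟩
        rcases Nat.lt_trichotomy k p with h1 | h1 | h1
        · rcases Nat.eq_zero_or_pos k with rfl | hk0
          · exact Or.inr ⟨0, hq, by simp [h0g]⟩
          · exact Or.inl ⟨k, h1, by simp [hgdef, hk0.ne', le_of_lt h1]⟩
        · subst h1
          refine Or.inl ⟨0, hp, ?_⟩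
          simp only [hgdef, if_neg hp.ne', if_pos le_rfl, pow_zero]
          exact hpa.symm
        · refine Or.inr ⟨k - p, by omega, ?_⟩
          simp only [hgdef, if_neg (show k ≠ 0 by omega), if_neg (not_le.mpr h1)]
      · rintro (⟨k, hk, rfl⟩ | ⟨k, hk, rfl⟩)
        · rcases Nat.eq_zero_or_pos k with rfl | hk0
          · refine ⟨p, by omega, ?_⟩
            simp only [hgdef, if_neg hp.ne', if_pos le_rfl, pow_zero]
            exact hpa
          · exact ⟨k, by omega, by simp [hgdef, hk0.ne', le_of_lt hk]⟩
        · rcases Nat.eq_zero_or_pos k with rfl | hk0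
          · exact ⟨0, by omega, by simp [h0g]⟩
          · refine ⟨p + k, by omega, ?_⟩
            simp only [hgdef, if_neg (show p + k ≠ 0 by omega),
              if_neg (show ¬ p + k ≤ p by omega)]
            rw [show p + k - p = k from by omega]
    · rw [hsets, hcardg, hcardσa, hcardσb]
end

section
/- Let μ₁ = (1 2)(3 4)(5 6)(7 8)(9 10)(11 12)(13 14)(15 16)(17 18) ∈ S₁₈, let τ = (1 2 3)(5 6 7)(4 9 11)(8 10 14)(12 16 18)(13 17 15) and ρ = (1 2 3)(5 6 7)(4 11 9)(8 14 10)(12 16 18)(13 17 15), and let τ∞, ρ∞ be determined by μ₁·τ·τ∞ = id and μ₁·ρ·ρ∞ = id. Then there is no permutation σ ∈ S₁₈ with σμ₁σ⁻¹ = μ₁, στσ⁻¹ = ρ, and στ∞σ⁻¹ = ρ∞. -/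
/-- The 3-cycle `(a b c)` as a permutation. -/
def cyc3 (a b c : Fin 18) : Equiv.Perm (Fin 18) := Equiv.swap a b * Equiv.swap b c

/-- `μ₁ = (1 2)(3 4)(5 6)(7 8)(9 10)(11 12)(13 14)(15 16)(17 18)` (0-based indexing). -/
def mu1 : Equiv.Perm (Fin 18) :=
  Equiv.swap 0 1 * Equiv.swap 2 3 * Equiv.swap 4 5 * Equiv.swap 6 7 * Equiv.swap 8 9 *
    Equiv.swap 10 11 * Equiv.swap 12 13 * Equiv.swap 14 15 * Equiv.swap 16 17

/-- `τ = (1 2 3)(5 6 7)(4 9 11)(8 10 14)(12 16 18)(13 17 15)` (0-based indexing). -/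
def tau : Equiv.Perm (Fin 18) :=
  cyc3 0 1 2 * cyc3 4 5 6 * cyc3 3 8 10 * cyc3 7 9 13 * cyc3 11 15 17 * cyc3 12 16 14

/-- `ρ = (1 2 3)(5 6 7)(4 11 9)(8 14 10)(12 16 18)(13 17 15)` (0-based indexing). -/
def rho : Equiv.Perm (Fin 18) :=
  cyc3 0 1 2 * cyc3 4 5 6 * cyc3 3 10 8 * cyc3 7 13 9 * cyc3 11 15 17 * cyc3 12 16 14

/-- The monodromy factorizations `(μ₁, τ, τ∞)` and `(μ₁, ρ, ρ∞)` (lines 15 and 16 of the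
table of `j_Γ̄` monodromy data), where `τ∞, ρ∞` are determined by `μ₁·τ·τ∞ = 1` and
`μ₁·ρ·ρ∞ = 1`, are not simultaneously conjugate in `S₁₈`. -/
theorem stmt_17 (tauInf rhoInf : Equiv.Perm (Fin 18))
    (h1 : mu1 * tau * tauInf = 1) (h2 : mu1 * rho * rhoInf = 1) :
    ¬ ∃ σ : Equiv.Perm (Fin 18),
        σ * mu1 * σ⁻¹ = mu1 ∧ σ * tau * σ⁻¹ = rho ∧ σ * tauInf * σ⁻¹ = rhoInf := by

  rintro ⟨σ, hσm, hσt, -⟩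
  rw [mul_inv_eq_iff_eq_mul] at hσm hσt
  have hm : ∀ x, σ (mu1 x) = mu1 (σ x) := fun x => by
    have h := Equiv.ext_iff.mp hσm x
    simpa [Equiv.Perm.mul_apply] using h
  have ht : ∀ x, σ (tau x) = rho (σ x) := fun x => by
    have h := Equiv.ext_iff.mp hσt x
    simpa [Equiv.Perm.mul_apply] using h
  have hfix : mu1 (rho (σ 0)) = σ 0 := by
    have h := hm (tau 0)
    rw [ht 0] at h
    rw [show (mu1 (tau 0) : Fin 18) = 0 from by decide] at h
    exact h.symm
  have hk04 : σ 0 = 0 ∨ σ 0 = 4 := by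
    have key : ∀ k : Fin 18, mu1 (rho k) = k → k = 0 ∨ k = 4 := by set_option maxRecDepth 100000 in decide
    exact key _ hfix
  rcases hk04 with hk | hk
  · have h0 : σ 0 = 0 := hk
    have h1 : σ 1 = 1 := by
      have h : σ (mu1 0) = 1 := by rw [hm 0, h0]; decide
      rwa [show (mu1 0 : Fin 18) = 1 from by decide] at h
    have h2 : σ 2 = 2 := by
      have h : σ (tau 1) = 2 := by rw [ht 1, h1]; decide
      rwa [show (tau 1 : Fin 18) = 2 from by decide] at h
    have h3 : σ 3 = 3 := by
      have h : σ (mu1 2) = 3 := by rw [hm 2, h2]; decide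
      rwa [show (mu1 2 : Fin 18) = 3 from by decide] at h
    have h8 : σ 8 = 10 := by
      have h : σ (tau 3) = 10 := by rw [ht 3, h3]; decide
      rwa [show (tau 3 : Fin 18) = 8 from by decide] at h
    have h9 : σ 9 = 11 := by
      have h : σ (mu1 8) = 11 := by rw [hm 8, h8]; decide
      rwa [show (mu1 8 : Fin 18) = 9 from by decide] at h
    have h10 : σ 10 = 8 := by
      have h : σ (tau 8) = 8 := by rw [ht 8, h8]; decide
      rwa [show (tau 8 : Fin 18) = 10 from by decide] at h
    have h13 : σ 13 = 15 := by
      have h : σ (tau 9) = 15 := by rw [ht 9, h9]; decide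
      rwa [show (tau 9 : Fin 18) = 13 from by decide] at h
    have h11 : σ 11 = 9 := by
      have h : σ (mu1 10) = 9 := by rw [hm 10, h10]; decide
      rwa [show (mu1 10 : Fin 18) = 11 from by decide] at h
    have h12 : σ 12 = 14 := by
      have h : σ (mu1 13) = 14 := by rw [hm 13, h13]; decide
      rwa [show (mu1 13 : Fin 18) = 12 from by decide] at h
    have h7 : σ 7 = 17 := by
      have h : σ (tau 13) = 17 := by rw [ht 13, h13]; decide
      rwa [show (tau 13 : Fin 18) = 7 from by decide] at h
    have h15 : σ 15 = 7 := by
      have h : σ (tau 11) = 7 := by rw [ht 11, h11]; decide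
      rwa [show (tau 11 : Fin 18) = 15 from by decide] at h
    have h16 : σ 16 = 12 := by
      have h : σ (tau 12) = 12 := by rw [ht 12, h12]; decide
      rwa [show (tau 12 : Fin 18) = 16 from by decide] at h
    have h6 : σ 6 = 16 := by
      have h : σ (mu1 7) = 16 := by rw [hm 7, h7]; decide
      rwa [show (mu1 7 : Fin 18) = 6 from by decide] at h
    have h14 : σ 14 = 6 := by
      have h : σ (mu1 15) = 6 := by rw [hm 15, h15]; decide
      rwa [show (mu1 15 : Fin 18) = 14 from by decide] at h
    have h17 : σ 17 = 13 := by
      have h : σ (tau 15) = 13 := by rw [ht 15, h15]; decide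
      rwa [show (tau 15 : Fin 18) = 17 from by decide] at h
    have hc : σ 14 = 16 := by
      have h : σ (tau 16) = 16 := by rw [ht 16, h16]; decide
      rwa [show (tau 16 : Fin 18) = 14 from by decide] at h
    exact absurd (h14.symm.trans hc) (by decide)
  · have h0 : σ 0 = 4 := hk
    have h1 : σ 1 = 5 := by
      have h : σ (mu1 0) = 5 := by rw [hm 0, h0]; decide
      rwa [show (mu1 0 : Fin 18) = 1 from by decide] at h
    have h2 : σ 2 = 6 := by
      have h : σ (tau 1) = 6 := by rw [ht 1, h1]; decide
      rwa [show (tau 1 : Fin 18) = 2 from by decide] at h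
    have h3 : σ 3 = 7 := by
      have h : σ (mu1 2) = 7 := by rw [hm 2, h2]; decide
      rwa [show (mu1 2 : Fin 18) = 3 from by decide] at h
    have h8 : σ 8 = 13 := by
      have h : σ (tau 3) = 13 := by rw [ht 3, h3]; decide
      rwa [show (tau 3 : Fin 18) = 8 from by decide] at h
    have h9 : σ 9 = 12 := by
      have h : σ (mu1 8) = 12 := by rw [hm 8, h8]; decide
      rwa [show (mu1 8 : Fin 18) = 9 from by decide] at h
    have h10 : σ 10 = 9 := by
      have h : σ (tau 8) = 9 := by rw [ht 8, h8]; decide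
      rwa [show (tau 8 : Fin 18) = 10 from by decide] at h
    have h13 : σ 13 = 16 := by
      have h : σ (tau 9) = 16 := by rw [ht 9, h9]; decide
      rwa [show (tau 9 : Fin 18) = 13 from by decide] at h
    have h11 : σ 11 = 8 := by
      have h : σ (mu1 10) = 8 := by rw [hm 10, h10]; decide
      rwa [show (mu1 10 : Fin 18) = 11 from by decide] at h
    have h12 : σ 12 = 17 := by
      have h : σ (mu1 13) = 17 := by rw [hm 13, h13]; decide
      rwa [show (mu1 13 : Fin 18) = 12 from by decide] at h
    have h7 : σ 7 = 14 := by
      have h : σ (tau 13) = 14 := by rw [ht 13, h13]; decide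
      rwa [show (tau 13 : Fin 18) = 7 from by decide] at h
    have h15 : σ 15 = 3 := by
      have h : σ (tau 11) = 3 := by rw [ht 11, h11]; decide
      rwa [show (tau 11 : Fin 18) = 15 from by decide] at h
    have h16 : σ 16 = 11 := by
      have h : σ (tau 12) = 11 := by rw [ht 12, h12]; decide
      rwa [show (tau 12 : Fin 18) = 16 from by decide] at h
    have h6 : σ 6 = 15 := by
      have h : σ (mu1 7) = 15 := by rw [hm 7, h7]; decide
      rwa [show (mu1 7 : Fin 18) = 6 from by decide] at h
    have h14 : σ 14 = 2 := by
      have h : σ (mu1 15) = 2 := by rw [hm 15, h15]; decide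
      rwa [show (mu1 15 : Fin 18) = 14 from by decide] at h
    have h17 : σ 17 = 10 := by
      have h : σ (tau 15) = 10 := by rw [ht 15, h15]; decide
      rwa [show (tau 15 : Fin 18) = 17 from by decide] at h
    have hc : σ 14 = 15 := by
      have h : σ (tau 16) = 15 := by rw [ht 16, h16]; decide
      rwa [show (tau 16 : Fin 18) = 14 from by decide] at h
    exact absurd (h14.symm.trans hc) (by decide)
end
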